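/- Let F : ℝ² → SU(2) be smooth with F⁻¹ ∂_x F = u₀ e₃ + e₁ for a smooth function u₀ : ℝ² → ℝ, and let f : ℝ² → su(2) be a smooth map with ∂_x f = F e₁ F⁻¹. Let γ(x) := f(x, 0). Then γ is unit speed, its curvature satisfies |γ″(x)| = |u₀(x, 0)|, ⟨[γ′, γ″], γ‴⟩(x) = u₀(x,0)² and |[γ′, γ″]|²(x) = u₀(x,0)², so at every x with u₀(x, 0) ≠ 0 the torsion of γ, ⟨[γ′, γ″], γ‴⟩ / |[γ′, γ″]|², equals 1. -/

import Mathlib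

open Matrix

attribute [local instance] Matrix.normedAddCommGroup Matrix.normedSpace

noncomputable section

/-- The space of 2×2 complex matrices. -/
abbrev M2 : Type := Matrix (Fin 2) (Fin 2) ℂ

/-- Basis vector `e₁` of `su(2)`. -/
def e1 : M2 := (1 / 2 : ℂ) • !![0, Complex.I; Complex.I, 0]

/-- Basis vector `e₂` of `su(2)`. -/
def e2 : M2 := (1 / 2 : ℂ) • !![0, -1; 1, 0]

/-- Basis vector `e₃` of `su(2)`. -/
def e3 : M2 := (1 / 2 : ℂ) • !![Complex.I, 0; 0, -Complex.I]

/-- The Lie bracket `[X, Y] = XY - YX`. -/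
def br (X Y : M2) : M2 := X * Y - Y * X

/-- Partial derivative in the `x`-direction. -/
def pdx (g : ℝ × ℝ → M2) (p : ℝ × ℝ) : M2 := fderiv ℝ g p (1, 0)

/-- Partial derivative in the `y`-direction. -/
def pdy (g : ℝ × ℝ → M2) (p : ℝ × ℝ) : M2 := fderiv ℝ g p (0, 1)

/-- The inner product `⟨X, Y⟩ = −2 Re (tr (X Y))` on `su(2)`. -/
def ip (X Y : M2) : ℝ := -2 * (Matrix.trace (X * Y)).re

/-! ### Auxiliary infrastructure -/

/-- Matrix multiplication as a continuous bilinear map. -/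
def mulL : M2 →L[ℝ] M2 →L[ℝ] M2 :=
  LinearMap.toContinuousLinearMap
    ((LinearMap.toContinuousLinearMap.toLinearMap).comp (LinearMap.mul ℝ M2))

lemma mulL_apply (a b : M2) : mulL a b = a * b := rfl

lemma hasDerivAt_mul' {a b : ℝ → M2} {a' b' : M2} {x : ℝ}
    (ha : HasDerivAt a a' x) (hb : HasDerivAt b b' x) :
    HasDerivAt (fun t => a t * b t) (a' * b x + a x * b') x := by
  have h := (mulL.isBoundedBilinearMap.hasFDerivAt (a x, b x)).comp_hasDerivAt x (ha.prodMk hb)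
  refine h.congr_deriv ?_
  simp [IsBoundedBilinearMap.deriv_apply, mulL_apply, add_comm]
  rfl

/-- `star` as a real-linear map on `M2`. -/
def mstarLM : M2 →ₗ[ℝ] M2 where
  toFun := star
  map_add' := star_add
  map_smul' := fun r a => by simp [star_smul]

def mstarL : M2 →L[ℝ] M2 := LinearMap.toContinuousLinearMap mstarLM

lemma hasDerivAt_star' {a : ℝ → M2} {a' : M2} {x : ℝ} (ha : HasDerivAt a a' x) :
    HasDerivAt (fun t => star (a t)) (star a') x :=
  mstarL.hasFDerivAt.comp_hasDerivAt x ha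

lemma hasDerivAt_line {E : Type} [NormedAddCommGroup E] [NormedSpace ℝ E]
    (g : ℝ × ℝ → E) (hg : Differentiable ℝ g) (x : ℝ) :
    HasDerivAt (fun t => g (t, 0)) (fderiv ℝ g (x, 0) (1, 0)) x :=
  (hg (x, 0)).hasFDerivAt.comp_hasDerivAt x ((hasDerivAt_id x).prodMk (hasDerivAt_const x (0:ℝ)))

/-! ### su(2) algebra facts -/

lemma key1 (u : ℝ) : (u • e3 + e1) * e1 - e1 * (u • e3 + e1) = u • e2 := by
  ext i j
  fin_cases i <;> fin_cases j <;>
    simp [e1, e2, e3, Matrix.mul_apply, Fin.sum_univ_two, Complex.ext_iff, Complex.real_smul] <;>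
    ring

lemma key2 (u : ℝ) : (u • e3 + e1) * e2 - e2 * (u • e3 + e1) = (-u) • e1 + e3 := by
  ext i j
  fin_cases i <;> fin_cases j <;>
    simp [e1, e2, e3, Matrix.mul_apply, Fin.sum_univ_two, Complex.ext_iff, Complex.real_smul] <;>
    ring

lemma key3 : br e1 e2 = e3 := by
  ext i j
  fin_cases i <;> fin_cases j <;>
    simp [br, e1, e2, e3, Matrix.mul_apply, Fin.sum_univ_two, Complex.ext_iff] <;> ring

lemma star_e1 : star e1 = -e1 := by
  ext i j
  fin_cases i <;> fin_cases j <;>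
    simp [e1, Matrix.conjTranspose_apply, Complex.ext_iff]

lemma star_e3 : star e3 = -e3 := by
  ext i j
  fin_cases i <;> fin_cases j <;>
    simp [e3, Matrix.conjTranspose_apply, Complex.ext_iff]

lemma ip11 : ip e1 e1 = 1 := by
  simp [ip, e1, Matrix.trace_fin_two, Matrix.mul_apply, Fin.sum_univ_two, Complex.ext_iff]
  norm_num [Complex.mul_re]

lemma ip22 : ip e2 e2 = 1 := by
  simp [ip, e2, Matrix.trace_fin_two, Matrix.mul_apply, Fin.sum_univ_two]
  norm_num [Complex.mul_re]

lemma ip33 : ip e3 e3 = 1 := by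
  simp [ip, e3, Matrix.trace_fin_two, Matrix.mul_apply, Fin.sum_univ_two]
  norm_num [Complex.mul_re]

lemma ip32 : ip e3 e2 = 0 := by
  simp [ip, e2, e3, Matrix.trace_fin_two, Matrix.mul_apply, Fin.sum_univ_two]

lemma ip31 : ip e3 e1 = 0 := by
  simp [ip, e1, e3, Matrix.trace_fin_two, Matrix.mul_apply, Fin.sum_univ_two]

lemma ip_smul_left (r : ℝ) (X Y : M2) : ip (r • X) Y = r * ip X Y := by
  simp [ip, smul_mul_assoc, Matrix.trace_smul, Complex.smul_re]; ring

lemma ip_smul_right (r : ℝ) (X Y : M2) : ip X (r • Y) = r * ip X Y := by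
  simp [ip, mul_smul_comm, Matrix.trace_smul, Complex.smul_re]; ring

lemma ip_add_right (X Y Z : M2) : ip X (Y + Z) = ip X Y + ip X Z := by
  simp [ip, mul_add, Matrix.trace_add]

lemma cMul (c : M2) (hc : star c * c = 1) (P Q : M2) :
    (c * P * star c) * (c * Q * star c) = c * (P * Q) * star c := by
  have hc' : ∀ Z : M2, star c * (c * Z) = Z := fun Z => by rw [← mul_assoc, hc, one_mul]
  simp only [mul_assoc, hc']

lemma ip_conj (c : M2) (hc : star c * c = 1) (X Y : M2) :
    ip (c * X * star c) (c * Y * star c) = ip X Y := by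
  unfold ip
  rw [cMul c hc X Y, Matrix.trace_mul_comm, ← mul_assoc, hc, one_mul]

lemma br_conj (c : M2) (hc : star c * c = 1) (X Y : M2) :
    br (c * X * star c) (c * Y * star c) = c * br X Y * star c := by
  unfold br
  rw [cMul c hc X Y, cMul c hc Y X, mul_sub, sub_mul]

lemma br_smul_right (r : ℝ) (X Y : M2) : br X (r • Y) = r • br X Y := by
  unfold br; rw [mul_smul_comm, smul_mul_assoc, smul_sub]

lemma ad_aux (Fm S B X : M2) :
    (Fm * B * X + Fm * 0) * S + Fm * X * (-B * S) = Fm * (B * X - X * B) * S := by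
  noncomm_ring

/-- along a characteristic singular curve `γ(x) = f(x, 0)` of a
pseudospherical frontal with frame satisfying `F⁻¹∂ₓF = u₀e₃ + e₁` and `f_x = Ad_F e₁`:
`γ` is unit speed, `|γ″| = |u₀|`, `⟨[γ′, γ″], γ‴⟩ = u₀²` and `|[γ′, γ″]|² = u₀²`;
hence wherever `u₀ ≠ 0` the torsion of `γ` equals `1`. -/
theorem statement13 (F : ℝ × ℝ → M2) (hF : ContDiff ℝ (⊤ : ℕ∞) F)
    (hFU : ∀ p, F p ∈ Matrix.specialUnitaryGroup (Fin 2) ℂ)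
    (u0 : ℝ × ℝ → ℝ) (hu0 : ContDiff ℝ (⊤ : ℕ∞) u0)
    (hx : ∀ p, (F p)⁻¹ * pdx F p = u0 p • e3 + e1)
    (f : ℝ × ℝ → M2) (hf : ContDiff ℝ (⊤ : ℕ∞) f)
    (hfx : ∀ p, pdx f p = F p * e1 * (F p)⁻¹)
    (gamma : ℝ → M2) (hgamma : gamma = fun x => f (x, 0)) :
    ∀ x : ℝ,
      ip (deriv gamma x) (deriv gamma x) = 1 ∧
      Real.sqrt (ip (deriv (deriv gamma) x) (deriv (deriv gamma) x)) = |u0 (x, 0)| ∧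
      ip (br (deriv gamma x) (deriv (deriv gamma) x)) (deriv (deriv (deriv gamma)) x)
        = u0 (x, 0) ^ 2 ∧
      ip (br (deriv gamma x) (deriv (deriv gamma) x))
          (br (deriv gamma x) (deriv (deriv gamma) x)) = u0 (x, 0) ^ 2 ∧
      (u0 (x, 0) ≠ 0 →
        ip (br (deriv gamma x) (deriv (deriv gamma) x)) (deriv (deriv (deriv gamma)) x)
          / ip (br (deriv gamma x) (deriv (deriv gamma) x))
              (br (deriv gamma x) (deriv (deriv gamma) x)) = 1) := by
  subst hgamma
  have hFd := hF.differentiable (by simp)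
  have hfd := hf.differentiable (by simp)
  have hud := hu0.differentiable (by simp)
  -- unitarity
  have hsc : ∀ t : ℝ, star (F (t, 0)) * F (t, 0) = 1 := fun t =>
    Matrix.mem_unitaryGroup_iff'.mp ((Matrix.mem_specialUnitaryGroup_iff.mp (hFU (t, 0))).1)
  have hcs : ∀ t : ℝ, F (t, 0) * star (F (t, 0)) = 1 := fun t =>
    Matrix.mem_unitaryGroup_iff.mp ((Matrix.mem_specialUnitaryGroup_iff.mp (hFU (t, 0))).1)
  have hinv : ∀ t : ℝ, (F (t, 0))⁻¹ = star (F (t, 0)) := fun t =>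
    Matrix.inv_eq_left_inv (hsc t)
  -- derivative of the frame
  have hcd : ∀ t : ℝ, HasDerivAt (fun x => F (x, 0))
      (F (t, 0) * (u0 (t, 0) • e3 + e1)) t := fun t => by
    have h : HasDerivAt (fun x => F (x, 0)) (pdx F (t, 0)) t := hasDerivAt_line F hFd t
    have h2 : pdx F (t, 0) = F (t, 0) * (u0 (t, 0) • e3 + e1) := by
      have h3 := hx (t, 0)
      rw [hinv t] at h3
      calc pdx F (t, 0) = (F (t, 0) * star (F (t, 0))) * pdx F (t, 0) := by
            rw [hcs t, one_mul]
        _ = F (t, 0) * (star (F (t, 0)) * pdx F (t, 0)) := by rw [mul_assoc]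
        _ = F (t, 0) * (u0 (t, 0) • e3 + e1) := by rw [h3]
    rwa [h2] at h
  -- derivative of the conjugate frame
  have hsd : ∀ t : ℝ, HasDerivAt (fun x => star (F (x, 0)))
      (-(u0 (t, 0) • e3 + e1) * star (F (t, 0))) t := fun t => by
    have h := hasDerivAt_star' (hcd t)
    have e : star (F (t, 0) * (u0 (t, 0) • e3 + e1))
        = -(u0 (t, 0) • e3 + e1) * star (F (t, 0)) := by
      rw [Matrix.star_mul]
      congr 1
      simp only [star_add, star_smul, star_trivial, star_e3, star_e1, smul_neg, neg_add]
    rwa [e] at h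
  -- derivative of u along the line
  have hud' : ∀ t : ℝ, HasDerivAt (fun x => u0 (x, 0)) (fderiv ℝ u0 (t, 0) (1, 0)) t :=
    fun t => hasDerivAt_line u0 hud t
  -- first derivative of gamma
  have hG1 : ∀ t : ℝ, HasDerivAt (fun x => f (x, 0))
      (F (t, 0) * e1 * star (F (t, 0))) t := fun t => by
    have h : HasDerivAt (fun x => f (x, 0)) (pdx f (t, 0)) t := hasDerivAt_line f hfd t
    rwa [hfx (t, 0), hinv t] at h
  -- second derivative
  have hG2 : ∀ t : ℝ, HasDerivAt (fun x => F (x, 0) * e1 * star (F (x, 0)))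
      (u0 (t, 0) • (F (t, 0) * e2 * star (F (t, 0)))) t := fun t => by
    have h := hasDerivAt_mul' (hasDerivAt_mul' (hcd t) (hasDerivAt_const t e1)) (hsd t)
    rw [ad_aux, key1, mul_smul_comm, smul_mul_assoc] at h
    exact h
  -- third derivative pieces
  have hM : ∀ t : ℝ, HasDerivAt (fun x => F (x, 0) * e2 * star (F (x, 0)))
      (F (t, 0) * ((-(u0 (t, 0))) • e1 + e3) * star (F (t, 0))) t := fun t => by
    have h := hasDerivAt_mul' (hasDerivAt_mul' (hcd t) (hasDerivAt_const t e2)) (hsd t)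
    rw [ad_aux, key2] at h
    exact h
  have hG3 : ∀ t : ℝ, HasDerivAt (fun x => u0 (x, 0) • (F (x, 0) * e2 * star (F (x, 0))))
      (u0 (t, 0) • (F (t, 0) * ((-(u0 (t, 0))) • e1 + e3) * star (F (t, 0)))
        + (fderiv ℝ u0 (t, 0) (1, 0)) • (F (t, 0) * e2 * star (F (t, 0)))) t :=
    fun t => (hud' t).smul (hM t)
  -- the derivative functions
  have hd1 : deriv (fun x => f (x, 0)) = fun t => F (t, 0) * e1 * star (F (t, 0)) :=
    funext fun t => (hG1 t).deriv
  have hd2 : deriv (deriv (fun x => f (x, 0)))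
      = fun t => u0 (t, 0) • (F (t, 0) * e2 * star (F (t, 0))) := by
    rw [hd1]; exact funext fun t => (hG2 t).deriv
  have hd3 : deriv (deriv (deriv (fun x => f (x, 0))))
      = fun t => u0 (t, 0) • (F (t, 0) * ((-(u0 (t, 0))) • e1 + e3) * star (F (t, 0)))
        + (fderiv ℝ u0 (t, 0) (1, 0)) • (F (t, 0) * e2 * star (F (t, 0))) := by
    rw [hd2]; exact funext fun t => (hG3 t).deriv
  intro x
  have hbr : br (deriv (fun x => f (x, 0)) x) (deriv (deriv (fun x => f (x, 0))) x)
      = u0 (x, 0) • (F (x, 0) * e3 * star (F (x, 0))) := by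
    simp only [hd2]
    simp only [hd1]
    rw [br_smul_right, br_conj _ (hsc x), key3]
  have hip3 : ip (br (deriv (fun x => f (x, 0)) x) (deriv (deriv (fun x => f (x, 0))) x))
      (deriv (deriv (deriv (fun x => f (x, 0)))) x) = u0 (x, 0) ^ 2 := by
    rw [hbr]
    simp only [hd3]
    simp only [ip_smul_left, ip_add_right, ip_smul_right, ip_conj _ (hsc x), ip32, ip31, ip33]
    ring
  have hip4 : ip (br (deriv (fun x => f (x, 0)) x) (deriv (deriv (fun x => f (x, 0))) x))
      (br (deriv (fun x => f (x, 0)) x) (deriv (deriv (fun x => f (x, 0))) x))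
      = u0 (x, 0) ^ 2 := by
    rw [hbr, ip_smul_left, ip_smul_right, ip_conj _ (hsc x), ip33]
    ring
  refine ⟨?_, ?_, hip3, hip4, ?_⟩
  · simp only [hd1]
    rw [ip_conj _ (hsc x), ip11]
  · simp only [hd2]
    rw [ip_smul_left, ip_smul_right, ip_conj _ (hsc x), ip22, mul_one,
      show u0 (x, 0) * u0 (x, 0) = u0 (x, 0) ^ 2 by ring, Real.sqrt_sq_eq_abs]
  · intro h
    rw [hip3, hip4]
    exact div_self (pow_ne_zero 2 h)
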